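/- arXiv:2510.07732 — 4 statements merged into one kernel-verified Lean document; each statement's English description precedes it below -/
import Mathlib

section
/- Let p be a probability measure on ℝ^d with positive continuously differentiable density whose score ∇log p has at most polynomial growth, and let R ∈ ℝ^{d×d} be orthogonal. Then the relative-score cross-covariance matrix transforms equivariantly under rotation: H(R#p) = R H(p) Rᵀ, where R#p is the pushforward of p under x ↦ Rx. -/
/-!
Substituting `x = R y` in the integral defining `H(R#p)` leaves the Gaussian unchanged, since
`γ` is invariant under orthogonal maps. By the chain rule the score of `R#p` at `R y` is
`R ∇log p(y)`, so the integrand becomes the `(i, j)` entry of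
`R (y (∇log p(y) + y)ᵀ) Rᵀ`, and linearity of the integral gives `R H(p) Rᵀ`. The polynomial
growth of the score makes every entry integrable, because `γ` has moments of all orders.
-/

open MeasureTheory ProbabilityTheory Matrix

/-- The standard Gaussian measure `γ = N(0, I_d)` on `ℝ^d`. -/
noncomputable def stdGaussian (d : ℕ) : Measure (Fin d → ℝ) :=
  Measure.pi fun _ => ProbabilityTheory.gaussianReal 0 1

noncomputable def norm2 {d : ℕ} (x : Fin d → ℝ) : ℝ :=
  Real.sqrt (∑ i, x i ^ 2)

noncomputable def partialLog {d : ℕ} (f : (Fin d → ℝ) → ℝ) (i : Fin d) (x : Fin d → ℝ) : ℝ :=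
  fderiv ℝ (fun z => Real.log (f z)) x (Pi.single i 1)

/-- The relative-score cross-covariance matrix
`H(p) = ∫ x (∇ log p(x) + x)ᵀ dγ(x)`, i.e. `H i j = E_γ[x i * (∂ⱼ log p(x) + x j)]`. -/
noncomputable def crossCov (d : ℕ) (f : (Fin d → ℝ) → ℝ) : Matrix (Fin d) (Fin d) ℝ :=
  Matrix.of fun i j => ∫ x, x i * (partialLog f j x + x j) ∂(stdGaussian d)

open WithLp

section Gaussian

variable {d : ℕ}

-- `Fin d → ℝ` carries the sup norm, so rotation invariance of `γ` is read off on
-- `EuclideanSpace`.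
lemma measurePreserving_toLp_stdGaussian (d : ℕ) :
    MeasurePreserving (MeasurableEquiv.toLp 2 (Fin d → ℝ)) (stdGaussian d)
      (ProbabilityTheory.stdGaussian (EuclideanSpace ℝ (Fin d))) :=
  ⟨(MeasurableEquiv.toLp 2 _).measurable, map_pi_eq_stdGaussian⟩

lemma integral_stdGaussian_eq_integral_euclidean {E : Type*} [NormedAddCommGroup E]
    [NormedSpace ℝ E] (F : (Fin d → ℝ) → E) :
    ∫ x, F x ∂stdGaussian d
      = ∫ y, F (ofLp y) ∂ProbabilityTheory.stdGaussian (EuclideanSpace ℝ (Fin d)) :=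
  ((measurePreserving_toLp_stdGaussian d).symm _).integral_comp' F |>.symm

lemma inner_toLp_mulVec {R : Matrix (Fin d) (Fin d) ℝ} (hR : R * Rᵀ = 1) (x y : Fin d → ℝ) :
    inner ℝ (toLp 2 (R *ᵥ x)) (toLp 2 (R *ᵥ y)) = inner ℝ (toLp 2 x) (toLp 2 y) := by
  simp only [EuclideanSpace.inner_eq_star_dotProduct, star_trivial]
  rw [dotProduct_mulVec, ← mulVec_transpose, mulVec_mulVec, mul_eq_one_comm.mp hR, one_mulVec]

noncomputable def orthogonalIsometry {R : Matrix (Fin d) (Fin d) ℝ} (hR : R * Rᵀ = 1) :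
    EuclideanSpace ℝ (Fin d) ≃ₗᵢ[ℝ] EuclideanSpace ℝ (Fin d) :=
  ((toLpLin 2 2 R).isometryOfInner fun x y => by
    simpa [toLpLin_apply] using inner_toLp_mulVec hR x.ofLp y.ofLp).toLinearIsometryEquiv rfl

lemma integral_comp_mulVec_stdGaussian {E : Type*} [NormedAddCommGroup E] [NormedSpace ℝ E]
    {R : Matrix (Fin d) (Fin d) ℝ} (hR : R * Rᵀ = 1) (F : (Fin d → ℝ) → E) :
    ∫ x, F (R *ᵥ x) ∂stdGaussian d = ∫ x, F x ∂stdGaussian d := by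
  let U := (orthogonalIsometry hR).toMeasurableEquiv
  have hU : MeasurePreserving U (ProbabilityTheory.stdGaussian _)
      (ProbabilityTheory.stdGaussian _) :=
    ⟨U.measurable, stdGaussian_map _⟩
  simp only [integral_stdGaussian_eq_integral_euclidean]
  exact hU.integral_comp' fun y => F (ofLp y)

lemma integrable_norm2_pow (n : ℕ) :
    Integrable (fun x : Fin d → ℝ => norm2 x ^ n) (stdGaussian d) := by
  have h := (IsGaussian.memLp_id (ProbabilityTheory.stdGaussian (EuclideanSpace ℝ (Fin d))) n
    (ENNReal.natCast_ne_top n)).integrable_norm_pow'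
  rw [← (measurePreserving_toLp_stdGaussian d).integrable_comp_emb
    (MeasurableEquiv.toLp 2 _).measurableEmbedding] at h
  refine h.congr (ae_of_all _ fun x => ?_)
  simp [norm2, EuclideanSpace.norm_eq]

lemma abs_apply_le_norm2 (x : Fin d → ℝ) (i : Fin d) : |x i| ≤ norm2 x := by
  rw [← Real.sqrt_sq_eq_abs, norm2]
  exact Real.sqrt_le_sqrt (Finset.single_le_sum (fun k _ => sq_nonneg (x k)) (Finset.mem_univ i))

lemma integrable_apply_mul_add_apply {g : (Fin d → ℝ) → ℝ}
    (hg : AEStronglyMeasurable g (stdGaussian d)) {c : ℝ} {m : ℕ}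
    (hbound : ∀ y, |g y| ≤ c * (1 + norm2 y ^ m)) (l k : Fin d) :
    Integrable (fun y => y l * (g y + y k)) (stdGaussian d) := by
  have hdom : Integrable (fun y => c * norm2 y ^ 1 + c * norm2 y ^ (m + 1) + norm2 y ^ 2)
      (stdGaussian d) :=
    (((integrable_norm2_pow 1).const_mul c).add ((integrable_norm2_pow (m + 1)).const_mul c)).add
      (integrable_norm2_pow 2)
  refine hdom.mono' ((continuous_apply l).aestronglyMeasurable.mul
    (hg.add (continuous_apply k).aestronglyMeasurable)) (ae_of_all _ fun y => ?_)
  calc ‖y l * (g y + y k)‖ ≤ norm2 y * (c * (1 + norm2 y ^ m) + norm2 y) := by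
        rw [Real.norm_eq_abs, abs_mul]
        exact mul_le_mul (abs_apply_le_norm2 y l)
          ((abs_add_le _ _).trans (add_le_add (hbound y) (abs_apply_le_norm2 y k)))
          (abs_nonneg _) (Real.sqrt_nonneg _)
    _ = c * norm2 y ^ 1 + c * norm2 y ^ (m + 1) + norm2 y ^ 2 := by ring

end Gaussian

section Score

variable {d : ℕ}

lemma apply_eq_sum_mul_apply_single {ι : Type*} [Fintype ι] [DecidableEq ι]
    (D : (ι → ℝ) →L[ℝ] ℝ) (v : ι → ℝ) :
    D v = ∑ k, v k * D (Pi.single k 1) := by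
  conv_lhs => rw [← Finset.univ_sum_single v]
  simp_rw [map_sum]
  refine Finset.sum_congr rfl fun k _ => ?_
  rw [← smul_eq_mul, ← map_smul, ← Pi.single_smul, smul_eq_mul, mul_one]

lemma partialLog_comp_mulVec (f : (Fin d → ℝ) → ℝ) (A : Matrix (Fin d) (Fin d) ℝ)
    {x : Fin d → ℝ} (hf : DifferentiableAt ℝ (fun z => Real.log (f z)) (A *ᵥ x)) :
    (fun j => partialLog (fun z => f (A *ᵥ z)) j x)
      = Aᵀ *ᵥ fun k => partialLog f k (A *ᵥ x) := by
  ext j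
  let L := LinearMap.toContinuousLinearMap (toLin' A)
  have hL : HasFDerivAt (fun z => Real.log (f (A *ᵥ z)))
      ((fderiv ℝ (fun z => Real.log (f z)) (A *ᵥ x)).comp L) x :=
    hf.hasFDerivAt.comp x L.hasFDerivAt
  have hcol : L (Pi.single j 1) = fun k => A k j := by
    ext k
    simp [L, mulVec_single]
  rw [partialLog, hL.fderiv, ContinuousLinearMap.comp_apply, hcol, apply_eq_sum_mul_apply_single]
  rfl

lemma continuous_partialLog {f : (Fin d → ℝ) → ℝ}
    (hf : ContDiff ℝ 1 fun z => Real.log (f z)) (k : Fin d) : Continuous (partialLog f k) :=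
  (hf.continuous_fderiv one_ne_zero).clm_apply continuous_const

end Score

lemma mulVec_apply_mul_mulVec_apply {α m n : Type*} [CommSemiring α] [Fintype n]
    (R : Matrix m n α) (v w : n → α) (i j : m) :
    (R *ᵥ v) i * (R *ᵥ w) j = (R * vecMulVec v w * Rᵀ) i j := by
  rw [mul_vecMulVec, vecMulVec_mul, vecMul_transpose, vecMulVec_apply]

lemma integral_mul_mul_apply {α : Type*} [MeasurableSpace α] {μ : Measure α}
    {l m n o : Type*} [Fintype m] [Fintype n] (A : Matrix l m ℝ) (N : α → Matrix m n ℝ)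
    (B : Matrix n o ℝ) (hN : ∀ a b, Integrable (fun y => N y a b) μ) (i : l) (j : o) :
    ∫ y, (A * N y * B) i j ∂μ = (A * Matrix.of (fun a b => ∫ y, N y a b ∂μ) * B) i j := by
  simp only [mul_apply, of_apply, Finset.sum_mul]
  rw [integral_finsetSum _ fun b _ => integrable_finsetSum _ fun a _ =>
    ((hN a b).const_mul _).mul_const _]
  refine Finset.sum_congr rfl fun b _ => ?_
  rw [integral_finsetSum _ fun a _ => ((hN a b).const_mul _).mul_const _]
  refine Finset.sum_congr rfl fun a _ => ?_
  rw [integral_mul_const, integral_const_mul]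

theorem crossCov_rotation_equivariant_general
    {d : ℕ} (f : (Fin d → ℝ) → ℝ) (hf_pos : ∀ x, 0 < f x) (hf_smooth : ContDiff ℝ 1 f)
    (h_score_poly : ∃ c : ℝ, ∃ m : ℕ, 0 < c ∧
      ∀ x, norm2 (fun i => partialLog f i x) ≤ c * (1 + norm2 x ^ m))
    (R : Matrix (Fin d) (Fin d) ℝ) (hR : R * R.transpose = 1) :
    crossCov d (fun x => f (R.transpose.mulVec x)) = R * crossCov d f * R.transpose := by
  have hlog : ContDiff ℝ 1 fun z => Real.log (f z) := hf_smooth.log fun x => (hf_pos x).ne'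
  obtain ⟨c, m, -, hscore⟩ := h_score_poly
  let s : (Fin d → ℝ) → Fin d → ℝ := fun y k => partialLog f k y
  have hscore_rot (y : Fin d → ℝ) :
      (fun j => partialLog (fun z => f (Rᵀ *ᵥ z)) j (R *ᵥ y)) = R *ᵥ s y := by
    rw [partialLog_comp_mulVec f Rᵀ (hlog.differentiable one_ne_zero _), transpose_transpose,
      mulVec_mulVec, mul_eq_one_comm.mp hR, one_mulVec]
  have hint (a b : Fin d) : Integrable (fun y => vecMulVec y (s y + y) a b) (stdGaussian d) :=
    integrable_apply_mul_add_apply (continuous_partialLog hlog b).aestronglyMeasurable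
      (fun y => (abs_apply_le_norm2 (s y) b).trans (hscore y)) a b
  ext i j
  calc crossCov d (fun x => f (Rᵀ *ᵥ x)) i j
      = ∫ y, (R *ᵥ y) i * (partialLog (fun z => f (Rᵀ *ᵥ z)) j (R *ᵥ y) + (R *ᵥ y) j)
          ∂stdGaussian d :=
        (integral_comp_mulVec_stdGaussian hR _).symm
    _ = ∫ y, (R * vecMulVec y (s y + y) * Rᵀ) i j ∂stdGaussian d := by
        congr with y
        rw [← mulVec_apply_mul_mulVec_apply, mulVec_add, ← hscore_rot y]
        rfl
    _ = (R * crossCov d f * Rᵀ) i j := integral_mul_mul_apply R _ Rᵀ hint i j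

/-- Let `p` be a probability measure on `ℝ^d` with positive continuously
differentiable density `f` whose score has at most polynomial growth, and let `R` be
orthogonal.  Then the relative-score cross-covariance matrix transforms equivariantly under
rotation: `H(R#p) = R H(p) Rᵀ`, where the pushforward `R#p` has density `x ↦ p(Rᵀ x)`. -/
theorem crossCov_rotation_equivariant
    {d : ℕ} (f : (Fin d → ℝ) → ℝ) (hf_pos : ∀ x, 0 < f x) (hf_smooth : ContDiff ℝ 1 f)
    (hp_prob : IsProbabilityMeasure
      ((volume : Measure (Fin d → ℝ)).withDensity fun x => ENNReal.ofReal (f x)))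
    (h_score_poly : ∃ c : ℝ, ∃ m : ℕ, 0 < c ∧
      ∀ x, norm2 (fun i => partialLog f i x) ≤ c * (1 + norm2 x ^ m))
    (R : Matrix (Fin d) (Fin d) ℝ) (hR : R * R.transpose = 1) :
    crossCov d (fun x => f (R.transpose.mulVec x)) = R * crossCov d f * R.transpose :=
  crossCov_rotation_equivariant_general f hf_pos hf_smooth h_score_poly R hR
end

section
/- Let d ≥ 1, let ν_1, …, ν_d > 0 satisfy Σ_{i=1}^d ν_i = d, and suppose max_i ν_i / min_i ν_i ≤ κ. If R is distributed according to the Haar probability measure on the orthogonal group O(d), then E_R[ Σ_{i=1}^d log( Σ_{j=1}^d R_{ij}² ν_j ) ] ≤ (2/((d+2)κ²)) Σ_{i=1}^d log ν_i. -/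
/-!
Write `N = R diag(ν) Rᵀ`, so that the `i`-th summand is `log N i i`. For orthogonal `R` the
diagonal entries `N i i` are convex combinations of the `ν j`, hence lie in `[min ν, max ν]`,
and they sum to `∑ ν = d`. The two-sided estimate
`x - 1 - (x - 1)² / (2 min ν) ≤ log x ≤ x - 1 - (x - 1)² / (2 max ν)` on `[min ν, max ν]` thus
reduces both sides of the inequality to quadratic quantities, and `max ν ≤ κ² min ν` compares
them once one knows that `E ∑ (N i i - 1)² = 2 / (d + 2) · ∑ (ν i - 1)²`. That second moment
comes from the invariance of `μ` under the rotation by `π/4` in the plane of two coordinates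
`a ≠ b`: it changes `∑ (N i i)²` by `2 N a b ² - (N a a - N b b)² / 2`, which therefore has
expectation zero, and summing over all pairs `a, b` expresses `E ∑ (N i i)²` through
`∑ a b, (N a b)² = ∑ ν²` and `∑ N i i = ∑ ν`.
-/

open MeasureTheory Matrix

instance matrixMeasurableSpace {m n α : Type*} [MeasurableSpace α] :
    MeasurableSpace (Matrix m n α) :=
  inferInstanceAs (MeasurableSpace (m → n → α))

open Finset

noncomputable def logGap (c x : ℝ) : ℝ := x - 1 - Real.log x - (x - 1) ^ 2 / (2 * c)

lemma logGap_one (c : ℝ) : logGap c 1 = 0 := by simp [logGap]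

lemma hasDerivAt_logGap (c : ℝ) {x : ℝ} (hx : x ≠ 0) :
    HasDerivAt (logGap c) ((x - 1) * (x⁻¹ - c⁻¹)) x := by
  refine ((((hasDerivAt_id x).sub_const 1).sub (Real.hasDerivAt_log hx)).sub
    ((((hasDerivAt_id x).sub_const 1).pow 2).div_const (2 * c))).congr_deriv ?_
  simp only [id]
  linear_combination -mul_inv_cancel₀ hx

lemma monotoneOn_logGap {c : ℝ} {D : Set ℝ} (hD : Convex ℝ D) (hD0 : D ⊆ Set.Ioi 0)
    (hsign : ∀ x ∈ interior D, 0 ≤ (x - 1) * (x⁻¹ - c⁻¹)) : MonotoneOn (logGap c) D :=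
  monotoneOn_of_hasDerivWithinAt_nonneg hD
    (fun _ hx => (hasDerivAt_logGap c (hD0 hx).ne').continuousAt.continuousWithinAt)
    (fun _ hx => (hasDerivAt_logGap c (hD0 (interior_subset hx)).ne').hasDerivWithinAt) hsign

lemma antitoneOn_logGap {c : ℝ} {D : Set ℝ} (hD : Convex ℝ D) (hD0 : D ⊆ Set.Ioi 0)
    (hsign : ∀ x ∈ interior D, (x - 1) * (x⁻¹ - c⁻¹) ≤ 0) : AntitoneOn (logGap c) D :=
  antitoneOn_of_hasDerivWithinAt_nonpos hD
    (fun _ hx => (hasDerivAt_logGap c (hD0 hx).ne').continuousAt.continuousWithinAt)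
    (fun _ hx => (hasDerivAt_logGap c (hD0 (interior_subset hx)).ne').hasDerivWithinAt) hsign

theorem log_le_sub_one_sub_sq_div {c x : ℝ} (hc : 1 ≤ c) (hx : 0 < x) (hxc : x ≤ c) :
    Real.log x ≤ x - 1 - (x - 1) ^ 2 / (2 * c) := by
  suffices logGap c 1 ≤ logGap c x by rw [logGap_one, logGap] at this; linarith
  rcases le_total x 1 with hx1 | hx1
  · refine antitoneOn_logGap (convex_Ioc 0 1) Set.Ioc_subset_Ioi_self ?_ ⟨hx, hx1⟩
      ⟨one_pos, le_rfl⟩ hx1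
    rw [interior_Ioc]
    exact fun t ht => mul_nonpos_of_nonpos_of_nonneg (by linarith [ht.2])
      (sub_nonneg.2 (inv_anti₀ ht.1 (by linarith [ht.2])))
  · refine monotoneOn_logGap (convex_Icc 1 c) (fun t ht => by simp; linarith [ht.1])
      ?_ ⟨le_rfl, hc⟩ ⟨hx1, hxc⟩ hx1
    rw [interior_Icc]
    exact fun t ht => mul_nonneg (by linarith [ht.1])
      (sub_nonneg.2 (inv_anti₀ (by linarith [ht.1]) ht.2.le))

theorem sub_one_sub_sq_div_le_log {c x : ℝ} (hc : 0 < c) (hc1 : c ≤ 1) (hcx : c ≤ x) :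
    x - 1 - (x - 1) ^ 2 / (2 * c) ≤ Real.log x := by
  suffices logGap c x ≤ logGap c 1 by rw [logGap_one, logGap] at this; linarith
  rcases le_total x 1 with hx1 | hx1
  · refine monotoneOn_logGap (convex_Icc c 1) (fun t ht => by simp; linarith [ht.1])
      ?_ ⟨hcx, hx1⟩ ⟨hc1, le_rfl⟩ hx1
    rw [interior_Icc]
    exact fun t ht => mul_nonneg_of_nonpos_of_nonpos (by linarith [ht.2])
      (sub_nonpos.2 (inv_anti₀ hc ht.1.le))
  · refine antitoneOn_logGap (convex_Ici 1) (fun t ht => by simp at ht ⊢; linarith)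
      ?_ Set.self_mem_Ici hx1 hx1
    rw [interior_Ici]
    exact fun t ht => mul_nonpos_of_nonneg_of_nonpos (by linarith [ht.out])
      (sub_nonpos.2 (inv_anti₀ hc (by linarith [ht.out])))

lemma sum_sub_one_sq {ι : Type*} [Fintype ι] {x : ι → ℝ} (hsum : ∑ i, x i = Fintype.card ι) :
    ∑ i, (x i - 1) ^ 2 = ∑ i, x i ^ 2 - Fintype.card ι := by
  simp only [sub_sq, mul_one, one_pow, sum_add_distrib, sum_sub_distrib, ← mul_sum, hsum,
    sum_const, card_univ, nsmul_eq_mul]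
  ring

lemma sum_sum_sub_sq {ι : Type*} [Fintype ι] (x : ι → ℝ) :
    ∑ a, ∑ b, (x a - x b) ^ 2 = 2 * Fintype.card ι * ∑ a, x a ^ 2 - 2 * (∑ a, x a) ^ 2 := by
  simp only [sub_sq, sum_add_distrib, sum_sub_distrib, sum_const, card_univ, ← mul_sum,
    ← sum_mul, nsmul_eq_mul]
  ring

lemma sum_sub_one_sub_sq_div {ι : Type*} [Fintype ι] {x : ι → ℝ}
    (hsum : ∑ i, x i = Fintype.card ι) (c : ℝ) :
    ∑ i, (x i - 1 - (x i - 1) ^ 2 / (2 * c)) = -(∑ i, (x i - 1) ^ 2) / (2 * c) := by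
  simp only [sum_sub_distrib, ← sum_div, hsum, sum_const, card_univ, nsmul_eq_mul, mul_one]
  ring

lemma sum_log_le_neg_sum_sq_div {ι : Type*} [Fintype ι] {x : ι → ℝ} {c : ℝ} (hc : 1 ≤ c)
    (hx : ∀ i, 0 < x i) (hxc : ∀ i, x i ≤ c) (hsum : ∑ i, x i = Fintype.card ι) :
    ∑ i, Real.log (x i) ≤ -(∑ i, (x i - 1) ^ 2) / (2 * c) :=
  sum_sub_one_sub_sq_div hsum c ▸ sum_le_sum fun i _ => log_le_sub_one_sub_sq_div hc (hx i) (hxc i)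

lemma neg_sum_sq_div_le_sum_log {ι : Type*} [Fintype ι] {x : ι → ℝ} {c : ℝ} (hc : 0 < c)
    (hc1 : c ≤ 1) (hcx : ∀ i, c ≤ x i) (hsum : ∑ i, x i = Fintype.card ι) :
    -(∑ i, (x i - 1) ^ 2) / (2 * c) ≤ ∑ i, Real.log (x i) :=
  sum_sub_one_sub_sq_div hsum c ▸ sum_le_sum fun i _ => sub_one_sub_sq_div_le_log hc hc1 (hcx i)

section Givens

variable {n : Type*} [Fintype n] [DecidableEq n]

noncomputable def givensRotation (a b : n) : Matrix n n ℝ :=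
  Matrix.of fun i k =>
    if i = a then ((1 : Matrix n n ℝ) a k - (1 : Matrix n n ℝ) b k) / √2
    else if i = b then ((1 : Matrix n n ℝ) a k + (1 : Matrix n n ℝ) b k) / √2
    else (1 : Matrix n n ℝ) i k

lemma givensRotation_mul_apply (a b : n) (M : Matrix n n ℝ) (i j : n) :
    (givensRotation a b * M) i j =
      if i = a then (M a j - M b j) / √2
      else if i = b then (M a j + M b j) / √2
      else M i j := by
  have row : ∀ c, ∑ k, (1 : Matrix n n ℝ) c k * M k j = M c j := fun c => by
    simpa only [mul_apply] using congrFun (congrFun (Matrix.one_mul M) c) j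
  simp only [mul_apply, givensRotation, of_apply]
  split_ifs <;> simp only [div_mul_eq_mul_div, ← sum_div, sub_mul, add_mul, sum_sub_distrib,
    sum_add_distrib, row]

lemma givensRotation_mem_orthogonalGroup {a b : n} (hab : a ≠ b) :
    givensRotation a b ∈ orthogonalGroup n ℝ := by
  rw [mem_orthogonalGroup_iff]
  ext i j
  rw [givensRotation_mul_apply]
  simp only [transpose_apply, givensRotation, of_apply, one_apply]
  split_ifs <;> subst_vars <;> simp_all [Ne.symm hab, eq_comm]
  all_goals field_simp; norm_num

lemma sum_diag_sq_givensRotation_conj {a b : n} (hab : a ≠ b) {M : Matrix n n ℝ}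
    (hM : M.IsSymm) :
    ∑ i, (givensRotation a b * M * (givensRotation a b)ᵀ) i i ^ 2 =
      ∑ i, M i i ^ 2 + (2 * M a b ^ 2 - (M a a - M b b) ^ 2 / 2) := by
  have hconj : givensRotation a b * M * (givensRotation a b)ᵀ =
      givensRotation a b * (givensRotation a b * M)ᵀ := by
    rw [transpose_mul, hM.eq, Matrix.mul_assoc]
  have hba : M b a = M a b := hM.apply a b
  suffices ∑ i, ((givensRotation a b * (givensRotation a b * M)ᵀ) i i ^ 2 - M i i ^ 2) =
      2 * M a b ^ 2 - (M a a - M b b) ^ 2 / 2 by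
    rw [sum_sub_distrib] at this; rw [hconj]; linarith
  rw [Fintype.sum_eq_add a b hab fun i ⟨hia, hib⟩ => by
      simp only [givensRotation_mul_apply, transpose_apply, hia, hib, if_false, sub_self]]
  simp only [givensRotation_mul_apply, transpose_apply, if_neg hab.symm, hba,
    ↓reduceIte]
  field_simp
  rw [show √2 ^ 4 = 4 by rw [show 4 = 2 * 2 from rfl, pow_mul, Real.sq_sqrt zero_le_two]; norm_num]
  ring

end Givens

section ConjDiagonal

variable {n : Type*} [Fintype n] [DecidableEq n]

def conjDiagonal (R : Matrix n n ℝ) (ν : n → ℝ) : Matrix n n ℝ := R * diagonal ν * Rᵀ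

variable {R : Matrix n n ℝ} {ν : n → ℝ}

lemma conjDiagonal_mul (Q : Matrix n n ℝ) : conjDiagonal (Q * R) ν = Q * conjDiagonal R ν * Qᵀ := by
  simp only [conjDiagonal, transpose_mul, Matrix.mul_assoc]

@[fun_prop]
lemma continuous_conjDiagonal_apply (a b : n) :
    Continuous fun R : Matrix n n ℝ => conjDiagonal R ν a b :=
  ((continuous_id.matrix_mul continuous_const).matrix_mul
    continuous_id.matrix_transpose).matrix_elem a b

lemma isSymm_conjDiagonal : (conjDiagonal R ν).IsSymm := by
  simp [conjDiagonal, IsSymm, transpose_mul, Matrix.mul_assoc]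

lemma conjDiagonal_apply_self (i : n) : conjDiagonal R ν i i = ∑ j, R i j ^ 2 * ν j := by
  rw [conjDiagonal, mul_apply]
  exact sum_congr rfl fun j _ => by rw [mul_diagonal, transpose_apply]; ring

lemma sum_sq_apply_eq_one (hR : R ∈ orthogonalGroup n ℝ) (i : n) : ∑ j, R i j ^ 2 = 1 := by
  simpa [mul_apply, sq] using congrFun (congrFun ((mem_orthogonalGroup_iff n ℝ).mp hR) i) i

lemma conjDiagonal_apply_self_pos (hR : R ∈ orthogonalGroup n ℝ) (hν : ∀ j, 0 < ν j) (i : n) :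
    0 < conjDiagonal R ν i i := by
  obtain ⟨j, -, hj⟩ := exists_ne_zero_of_sum_ne_zero
    ((sum_sq_apply_eq_one hR i).symm ▸ one_ne_zero : ∑ j, R i j ^ 2 ≠ 0)
  rw [conjDiagonal_apply_self]
  exact sum_pos' (fun k _ => mul_nonneg (sq_nonneg _) (hν k).le)
    ⟨j, mem_univ j, mul_pos (lt_of_le_of_ne (sq_nonneg _) (Ne.symm hj)) (hν j)⟩

lemma conjDiagonal_apply_self_le (hR : R ∈ orthogonalGroup n ℝ) {M : ℝ} (hνM : ∀ j, ν j ≤ M)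
    (i : n) : conjDiagonal R ν i i ≤ M := by
  calc conjDiagonal R ν i i ≤ ∑ j, R i j ^ 2 * M := by
        rw [conjDiagonal_apply_self]
        exact sum_le_sum fun j _ => mul_le_mul_of_nonneg_left (hνM j) (sq_nonneg _)
    _ = M := by rw [← sum_mul, sum_sq_apply_eq_one hR, one_mul]

lemma trace_conjDiagonal (hR : R ∈ orthogonalGroup n ℝ) : trace (conjDiagonal R ν) = ∑ j, ν j := by
  rw [conjDiagonal, trace_mul_comm, ← Matrix.mul_assoc, (mem_orthogonalGroup_iff' n ℝ).mp hR,
    Matrix.one_mul, trace_diagonal]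

lemma sum_conjDiagonal_apply_self (hR : R ∈ orthogonalGroup n ℝ) :
    ∑ i, conjDiagonal R ν i i = ∑ j, ν j :=
  trace_conjDiagonal hR

lemma sum_sum_sq_conjDiagonal (hR : R ∈ orthogonalGroup n ℝ) :
    ∑ a, ∑ b, conjDiagonal R ν a b ^ 2 = ∑ j, ν j ^ 2 := by
  have hsq : conjDiagonal R ν * (conjDiagonal R ν)ᵀ = conjDiagonal R (fun j => ν j ^ 2) := by
    simp only [conjDiagonal, transpose_mul, transpose_transpose, diagonal_transpose,
      Matrix.mul_assoc]
    rw [← Matrix.mul_assoc Rᵀ, (mem_orthogonalGroup_iff' n ℝ).mp hR, Matrix.one_mul,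
      ← Matrix.mul_assoc (diagonal ν), diagonal_mul_diagonal]
    simp only [sq]
  calc ∑ a, ∑ b, conjDiagonal R ν a b ^ 2 = trace (conjDiagonal R ν * (conjDiagonal R ν)ᵀ) := by
        simp only [sq, ← hadamard_apply, sum_hadamard_eq]
    _ = ∑ j, ν j ^ 2 := by rw [hsq, trace_conjDiagonal hR]

lemma sum_sum_conjDiagonal_defect (hR : R ∈ orthogonalGroup n ℝ) :
    ∑ a, ∑ b, (2 * conjDiagonal R ν a b ^ 2 -
        (conjDiagonal R ν a a - conjDiagonal R ν b b) ^ 2 / 2) =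
      2 * ∑ j, ν j ^ 2 + (∑ j, ν j) ^ 2 - Fintype.card n * ∑ i, conjDiagonal R ν i i ^ 2 := by
  simp only [sum_sub_distrib, ← mul_sum, ← sum_div]
  rw [sum_sum_sq_conjDiagonal hR, sum_sum_sub_sq, sum_conjDiagonal_apply_self hR]
  ring

end ConjDiagonal

instance matrixBorelSpace {m n : Type*} [Countable m] [Countable n] :
    BorelSpace (Matrix m n ℝ) :=
  inferInstanceAs (BorelSpace (m → n → ℝ))

section Haar

variable {n : Type*} [Fintype n] [DecidableEq n]

lemma isCompact_orthogonalGroup : IsCompact (orthogonalGroup n ℝ : Set (Matrix n n ℝ)) := by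
  have hclosed : IsClosed (orthogonalGroup n ℝ : Set (Matrix n n ℝ)) := by
    have : (orthogonalGroup n ℝ : Set (Matrix n n ℝ)) = {A | A * Aᵀ = 1} :=
      Set.ext fun A => mem_orthogonalGroup_iff n ℝ
    rw [this]
    exact isClosed_eq (continuous_id.matrix_mul continuous_id.matrix_transpose) continuous_const
  refine (isCompact_univ_pi fun _ => isCompact_univ_pi fun _ => isCompact_Icc).of_isClosed_subset
    hclosed fun A hA i _ j _ => abs_le.mp (entry_norm_bound_of_unitary hA i j)

structure IsHaarOrthogonal (μ : Measure (Matrix n n ℝ)) : Prop where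
  ae_mem : ∀ᵐ R ∂μ, R ∈ orthogonalGroup n ℝ
  map_mul_left : ∀ Q ∈ orthogonalGroup n ℝ, μ.map (Q * ·) = μ

namespace IsHaarOrthogonal

variable {μ : Measure (Matrix n n ℝ)}

lemma integrable_of_continuousOn [IsFiniteMeasure μ] (hμ : IsHaarOrthogonal μ)
    {f : Matrix n n ℝ → ℝ} (hf : ContinuousOn f (orthogonalGroup n ℝ)) : Integrable f μ := by
  have := hf.integrableOn_compact (μ := μ) isCompact_orthogonalGroup
  rwa [IntegrableOn, Measure.restrict_eq_self_of_ae_mem hμ.ae_mem] at this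

lemma integral_comp_mul_left (hμ : IsHaarOrthogonal μ) {Q : Matrix n n ℝ}
    (hQ : Q ∈ orthogonalGroup n ℝ) {f : Matrix n n ℝ → ℝ} (hf : Continuous f) :
    ∫ R, f (Q * R) ∂μ = ∫ R, f R ∂μ := by
  conv_rhs => rw [← hμ.map_mul_left Q hQ]
  exact (integral_map (continuous_const.matrix_mul continuous_id).aemeasurable
    hf.aestronglyMeasurable).symm

lemma integral_conjDiagonal_defect [IsFiniteMeasure μ] (hμ : IsHaarOrthogonal μ) {ν : n → ℝ}
    {a b : n} (hab : a ≠ b) :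
    ∫ R, (2 * conjDiagonal R ν a b ^ 2 -
      (conjDiagonal R ν a a - conjDiagonal R ν b b) ^ 2 / 2) ∂μ = 0 := by
  have hG := hμ.integral_comp_mul_left (givensRotation_mem_orthogonalGroup hab)
    (f := fun R => ∑ i, conjDiagonal R ν i i ^ 2) (by fun_prop)
  simp only [conjDiagonal_mul, sum_diag_sq_givensRotation_conj hab isSymm_conjDiagonal] at hG
  rw [integral_add (hμ.integrable_of_continuousOn (by fun_prop))
    (hμ.integrable_of_continuousOn (by fun_prop))] at hG
  linarith

theorem integral_sum_sq_conjDiagonal_apply_self [IsProbabilityMeasure μ]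
    (hμ : IsHaarOrthogonal μ) (ν : n → ℝ) :
    ∫ R, ∑ i, conjDiagonal R ν i i ^ 2 ∂μ =
      (2 * ∑ j, ν j ^ 2 + (∑ j, ν j) ^ 2) / (Fintype.card n + 2) := by
  have hint : ∀ {f : Matrix n n ℝ → ℝ}, Continuous f → Integrable f μ :=
    fun hf => hμ.integrable_of_continuousOn hf.continuousOn
  set P := fun R a b => 2 * conjDiagonal R ν a b ^ 2 -
    (conjDiagonal R ν a a - conjDiagonal R ν b b) ^ 2 / 2 with hP_def
  have hPcont : ∀ a b, Continuous fun R => P R a b := fun a b => by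
    simp only [hP_def]; fun_prop
  have hP : ∀ a b, ∫ R, P R a b ∂μ = if a = b then 2 * ∫ R, conjDiagonal R ν a a ^ 2 ∂μ else 0 := by
    intro a b
    split_ifs with hab
    · subst hab
      simp [hP_def, integral_const_mul]
    · exact hμ.integral_conjDiagonal_defect hab
  have hΦ : Integrable (fun R => ∑ i, conjDiagonal R ν i i ^ 2) μ := hint (by fun_prop)
  have hdiag : ∫ R, ∑ a, ∑ b, P R a b ∂μ = 2 * ∫ R, ∑ i, conjDiagonal R ν i i ^ 2 ∂μ := by
    rw [integral_finsetSum _ fun a _ => integrable_finsetSum _ fun b _ => hint (hPcont a b)]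
    simp only [integral_finsetSum _ fun b _ => hint (hPcont _ b), hP, sum_ite_eq, mem_univ,
      if_true, ← mul_sum]
    rw [integral_finsetSum _ fun i _ => hint (by fun_prop)]
  have hdefect : ∫ R, ∑ a, ∑ b, P R a b ∂μ = 2 * ∑ j, ν j ^ 2 + (∑ j, ν j) ^ 2 -
      Fintype.card n * ∫ R, ∑ i, conjDiagonal R ν i i ^ 2 ∂μ := by
    rw [integral_congr_ae (hμ.ae_mem.mono fun R hR => sum_sum_conjDiagonal_defect hR),
      integral_sub (integrable_const _) (hΦ.const_mul _), integral_const, integral_const_mul]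
    simp
  rw [eq_div_iff (by positivity)]
  linarith

theorem integral_sum_conjDiagonal_apply_self_sub_one_sq [IsProbabilityMeasure μ]
    (hμ : IsHaarOrthogonal μ) {ν : n → ℝ} (hsum : ∑ j, ν j = Fintype.card n) :
    ∫ R, ∑ i, (conjDiagonal R ν i i - 1) ^ 2 ∂μ =
      2 / (Fintype.card n + 2 : ℝ) * ∑ j, (ν j - 1) ^ 2 := by
  have hΦ : Integrable (fun R => ∑ i, conjDiagonal R ν i i ^ 2) μ :=
    hμ.integrable_of_continuousOn (by fun_prop)
  rw [integral_congr_ae (hμ.ae_mem.mono fun R hR =>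
      sum_sub_one_sq ((sum_conjDiagonal_apply_self hR).trans hsum)),
    integral_sub hΦ (integrable_const _), integral_const,
    hμ.integral_sum_sq_conjDiagonal_apply_self, sum_sub_one_sq hsum, hsum]
  simp only [probReal_univ, smul_eq_mul, one_mul]
  field_simp
  ring

theorem integral_sum_log_conjDiagonal_apply_self_le [IsProbabilityMeasure μ]
    (hμ : IsHaarOrthogonal μ) {ν : n → ℝ} (hν : ∀ j, 0 < ν j)
    (hsum : ∑ j, ν j = Fintype.card n) {M : ℝ} (hM : 1 ≤ M) (hνM : ∀ j, ν j ≤ M) :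
    ∫ R, ∑ i, Real.log (conjDiagonal R ν i i) ∂μ ≤
      -(∑ j, (ν j - 1) ^ 2) / ((Fintype.card n + 2) * M) := by
  have hlog : Integrable (fun R => ∑ i, Real.log (conjDiagonal R ν i i)) μ :=
    hμ.integrable_of_continuousOn <| continuousOn_finsetSum _ fun i _ =>
      (continuous_conjDiagonal_apply i i).continuousOn.log fun R hR =>
        (conjDiagonal_apply_self_pos hR hν i).ne'
  have hsq : Integrable (fun R => -(∑ i, (conjDiagonal R ν i i - 1) ^ 2) / (2 * M)) μ :=
    hμ.integrable_of_continuousOn (by fun_prop)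
  calc ∫ R, ∑ i, Real.log (conjDiagonal R ν i i) ∂μ
      ≤ ∫ R, -(∑ i, (conjDiagonal R ν i i - 1) ^ 2) / (2 * M) ∂μ :=
        integral_mono_ae hlog hsq <| hμ.ae_mem.mono fun R hR =>
          sum_log_le_neg_sum_sq_div hM (conjDiagonal_apply_self_pos hR hν)
            (conjDiagonal_apply_self_le hR hνM) ((sum_conjDiagonal_apply_self hR).trans hsum)
    _ = -(∑ j, (ν j - 1) ^ 2) / ((Fintype.card n + 2) * M) := by
        rw [integral_div, integral_neg, hμ.integral_sum_conjDiagonal_apply_self_sub_one_sq hsum]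
        field_simp

end IsHaarOrthogonal

end Haar

lemma ciInf_le_one_le_ciSup {ι : Type*} [Fintype ι] [Nonempty ι] {x : ι → ℝ}
    (hsum : ∑ i, x i = Fintype.card ι) : ⨅ i, x i ≤ 1 ∧ 1 ≤ ⨆ i, x i := by
  have hsum' : ∑ i, x i = ∑ _i : ι, (1 : ℝ) := by simp [hsum]
  obtain ⟨i, -, hi⟩ := exists_le_of_sum_le univ_nonempty hsum'.le
  obtain ⟨j, -, hj⟩ := exists_le_of_sum_le univ_nonempty hsum'.ge
  exact ⟨ciInf_le_of_le (Set.finite_range x).bddBelow i hi,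
    le_ciSup_of_le (Set.finite_range x).bddAbove j hj⟩

theorem haar_orthogonal_log_bound_general
    {d : ℕ} (ν : Fin d → ℝ) (hν : ∀ i, 0 < ν i)
    (hsum : ∑ i, ν i = d) (κ : ℝ)
    (hκ : (⨆ i, ν i) / (⨅ i, ν i) ≤ κ)
    (μHaar : Measure (Matrix (Fin d) (Fin d) ℝ)) [IsProbabilityMeasure μHaar]
    (hHaar_orth : ∀ᵐ R ∂μHaar, R * R.transpose = 1)
    (hHaar_inv : ∀ Q : Matrix (Fin d) (Fin d) ℝ, Q * Q.transpose = 1 →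
      μHaar.map (fun R => Q * R) = μHaar) :
    ∫ R, (∑ i, Real.log (∑ j, R i j ^ 2 * ν j)) ∂μHaar
      ≤ (2 / ((d + 2) * κ ^ 2)) * ∑ i, Real.log (ν i) := by
  rcases isEmpty_or_nonempty (Fin d) with _ | _
  · simp
  have hμ : IsHaarOrthogonal μHaar :=
    ⟨hHaar_orth.mono fun R hR => (mem_orthogonalGroup_iff _ ℝ).mpr hR,
      fun Q hQ => hHaar_inv Q ((mem_orthogonalGroup_iff _ ℝ).mp hQ)⟩
  have hsum' : ∑ i, ν i = Fintype.card (Fin d) := by simpa using hsum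
  set m := ⨅ i, ν i
  set M := ⨆ i, ν i
  obtain ⟨hm1, hM1⟩ := ciInf_le_one_le_ciSup hsum'
  have hm : 0 < m := (exists_eq_ciInf_of_finite (f := ν)).elim fun i hi => (hν i).trans_eq hi
  have hνm : ∀ i, m ≤ ν i := ciInf_le (Set.finite_range ν).bddBelow
  have hνM : ∀ i, ν i ≤ M := le_ciSup (Set.finite_range ν).bddAbove
  have hMκ : M ≤ κ ^ 2 * m := by
    have hκ1 : 1 ≤ κ := ((one_le_div hm).mpr (by linarith)).trans hκ
    nlinarith [(div_le_iff₀ hm).mp hκ]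
  calc ∫ R, (∑ i, Real.log (∑ j, R i j ^ 2 * ν j)) ∂μHaar
      = ∫ R, ∑ i, Real.log (conjDiagonal R ν i i) ∂μHaar := by
        simp only [conjDiagonal_apply_self]
    _ ≤ -(∑ i, (ν i - 1) ^ 2) / ((d + 2) * M) := by
        simpa using hμ.integral_sum_log_conjDiagonal_apply_self_le hν hsum' hM1 hνM
    _ ≤ -(∑ i, (ν i - 1) ^ 2) / ((d + 2) * (κ ^ 2 * m)) := by
        rw [neg_div, neg_div, neg_le_neg_iff]
        gcongr
    _ = 2 / ((d + 2) * κ ^ 2) * (-(∑ i, (ν i - 1) ^ 2) / (2 * m)) := by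
        field_simp
    _ ≤ 2 / ((d + 2) * κ ^ 2) * ∑ i, Real.log (ν i) := by
        gcongr
        exact neg_sum_sq_div_le_sum_log hm hm1 hνm hsum'

/-- Let `ν i > 0` with `∑ i, ν i = d` and `(max_i ν i) / (min_i ν i) ≤ κ`.
If `R` is Haar-distributed on the orthogonal group `O(d)` (encoded as a probability measure
on `d × d` matrices concentrated on orthogonal matrices and invariant under left translation
by every orthogonal matrix), then
`E_R[∑ i, log (∑ j, R i j ^ 2 * ν j)] ≤ (2 / ((d + 2) κ²)) ∑ i, log (ν i)`. -/
theorem haar_orthogonal_log_bound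
    {d : ℕ} (hd : 0 < d) (ν : Fin d → ℝ) (hν : ∀ i, 0 < ν i)
    (hsum : ∑ i, ν i = d) (κ : ℝ)
    (hκ : (⨆ i, ν i) / (⨅ i, ν i) ≤ κ)
    (μHaar : Measure (Matrix (Fin d) (Fin d) ℝ)) [IsProbabilityMeasure μHaar]
    (hHaar_orth : ∀ᵐ R ∂μHaar, R * R.transpose = 1)
    (hHaar_inv : ∀ Q : Matrix (Fin d) (Fin d) ℝ, Q * Q.transpose = 1 →
      μHaar.map (fun R => Q * R) = μHaar) :
    ∫ R, (∑ i, Real.log (∑ j, R i j ^ 2 * ν j)) ∂μHaar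
      ≤ (2 / ((d + 2) * κ ^ 2)) * ∑ i, Real.log (ν i) :=
  haar_orthogonal_log_bound_general ν hν hsum κ hκ μHaar hHaar_orth hHaar_inv
end

section
/- Let X be a real random variable taking values in [a,b], and let g : [a,b] → ℝ be twice continuously differentiable. Then (1/2) (inf_{x∈[a,b]} g''(x)) · Var(X) ≤ E[g(X)] − g(E[X]) ≤ (1/2) (sup_{x∈[a,b]} g''(x)) · Var(X). -/
/-!
If `c ≤ g''` on `[a, b]` and `m = E[X]`, then `x ↦ g x - c / 2 * (x - m) ^ 2` is convex on
`[a, b]`, and Jensen's inequality for this function is exactly `c / 2 * Var X ≤ E[g X] - g m`.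
The upper bound is the lower bound for `-g`.
-/

open MeasureTheory Set

theorem Set.Subsingleton.convexOn {𝕜 E β : Type*} [Semiring 𝕜] [PartialOrder 𝕜]
    [AddCommMonoid E] [Module 𝕜 E] [AddCommMonoid β] [PartialOrder β] [Module 𝕜 β]
    {s : Set E} (hs : s.Subsingleton) (f : E → β) : ConvexOn 𝕜 s f := by
  refine ⟨hs.convex, fun x hx y hy p q _ _ hpq => ?_⟩
  obtain rfl := hs hx hy
  rw [← add_smul, ← add_smul, hpq, one_smul, one_smul]

theorem ContDiffOn.hasDerivWithinAt_derivWithin {𝕜 F : Type*} [NontriviallyNormedField 𝕜]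
    [NormedAddCommGroup F] [NormedSpace 𝕜 F] {f : 𝕜 → F} {s : Set 𝕜} {x : 𝕜}
    (hf : ContDiffOn 𝕜 2 f s) (hs : UniqueDiffOn 𝕜 s) (hx : x ∈ s) :
    HasDerivWithinAt (derivWithin f s) (iteratedDerivWithin 2 f s x) s x := by
  have hdiff := hf.differentiableOn_iteratedDerivWithin (m := 1) (by norm_num) hs x hx
  rw [iteratedDerivWithin_one] at hdiff
  rw [iteratedDerivWithin_succ, iteratedDerivWithin_one]
  exact hdiff.hasDerivWithinAt

theorem convexOn_sub_mul_sq_of_le_iteratedDerivWithin {D : Set ℝ} (hD : Convex ℝ D)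
    (hDu : UniqueDiffOn ℝ D) {g : ℝ → ℝ} (hg : ContDiffOn ℝ 2 g D) {c : ℝ}
    (hc : ∀ x ∈ interior D, c ≤ iteratedDerivWithin 2 g D x) (m : ℝ) :
    ConvexOn ℝ D (fun x => g x - c / 2 * (x - m) ^ 2) := by
  have hsq (x : ℝ) : HasDerivAt (fun x => c / 2 * (x - m) ^ 2) (c * (x - m)) x :=
    ((((hasDerivAt_id' x).sub_const m).fun_pow 2).const_mul (c / 2)).congr_deriv (by ring)
  have hlin (x : ℝ) : HasDerivAt (fun x => c * (x - m)) c x :=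
    (((hasDerivAt_id' x).sub_const m).const_mul c).congr_deriv (by ring)
  refine convexOn_of_hasDerivWithinAt2_nonneg hD (hg.continuousOn.sub (by fun_prop))
    (f' := fun x => derivWithin g D x - c * (x - m))
    (f'' := fun x => iteratedDerivWithin 2 g D x - c) (fun x hx => ?_) (fun x hx => ?_)
    (fun x hx => sub_nonneg.2 (hc x hx))
  · exact ((hg.differentiableOn two_ne_zero x (interior_subset hx)).hasDerivWithinAt.sub
      (hsq x).hasDerivWithinAt).mono interior_subset
  · exact ((hg.hasDerivWithinAt_derivWithin hDu (interior_subset hx)).sub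
      (hlin x).hasDerivWithinAt).mono interior_subset

theorem convexOn_Icc_sub_mul_sq_of_le_iteratedDerivWithin {a b : ℝ} {g : ℝ → ℝ}
    (hg : ContDiffOn ℝ 2 g (Icc a b)) {c : ℝ}
    (hc : ∀ x ∈ Ioo a b, c ≤ iteratedDerivWithin 2 g (Icc a b) x) (m : ℝ) :
    ConvexOn ℝ (Icc a b) (fun x => g x - c / 2 * (x - m) ^ 2) := by
  rcases lt_or_ge a b with hab | hba
  · exact convexOn_sub_mul_sq_of_le_iteratedDerivWithin (convex_Icc a b) (uniqueDiffOn_Icc hab)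
      hg (by rwa [interior_Icc]) m
  · exact (subsingleton_Icc_of_ge hba).convexOn _

theorem isCompact_image_iteratedDerivWithin_Icc {a b : ℝ} {g : ℝ → ℝ} {n : ℕ}
    (hg : ContDiffOn ℝ n g (Icc a b)) :
    IsCompact (iteratedDerivWithin n g (Icc a b) '' Icc a b) := by
  refine isCompact_Icc.image_of_continuousOn ?_
  rcases lt_or_ge a b with hab | hba
  · exact hg.continuousOn_iteratedDerivWithin le_rfl (uniqueDiffOn_Icc hab)
  · exact (subsingleton_Icc_of_ge hba).continuousOn _

theorem ContinuousOn.measurable_comp {α β : Type*} [MeasurableSpace α]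
    [TopologicalSpace β] [MeasurableSpace β] [OpensMeasurableSpace β] {g : β → ℝ} {s : Set β}
    {X : α → β} (hg : ContinuousOn g s) (hX : Measurable X) (hXs : ∀ ω, X ω ∈ s) :
    Measurable (fun ω => g (X ω)) :=
  (continuousOn_iff_continuous_domRestrict.1 hg).measurable.comp (hX.subtype_mk (h := hXs))

theorem ContinuousOn.integrable_comp_of_isCompact {α β : Type*} [MeasurableSpace α]
    {μ : Measure α} [IsFiniteMeasure μ]
    [TopologicalSpace β] [MeasurableSpace β] [OpensMeasurableSpace β] {g : β → ℝ} {s : Set β}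
    {X : α → β} (hg : ContinuousOn g s) (hs : IsCompact s) (hX : Measurable X)
    (hXs : ∀ ω, X ω ∈ s) : Integrable (fun ω => g (X ω)) μ := by
  obtain ⟨C, hC⟩ := hs.exists_bound_of_continuousOn hg
  exact .of_bound (hg.measurable_comp hX hXs).aestronglyMeasurable C
    (ae_of_all _ fun ω => hC _ (hXs ω))

theorem ConvexOn.half_mul_variance_le_integral_sub {Ω : Type*} [MeasurableSpace Ω]
    {μ : Measure Ω} [IsProbabilityMeasure μ] {s : Set ℝ} {X : Ω → ℝ} {g : ℝ → ℝ} {c : ℝ}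
    (hconv : ConvexOn ℝ s (fun x => g x - c / 2 * (x - ∫ ω, X ω ∂μ) ^ 2))
    (hgc : ContinuousOn g s) (hs : IsClosed s) (hXs : ∀ᵐ ω ∂μ, X ω ∈ s) (hX : Integrable X μ)
    (hgX : Integrable (fun ω => g (X ω)) μ)
    (hX2 : Integrable (fun ω => (X ω - ∫ ω', X ω' ∂μ) ^ 2) μ) :
    1 / 2 * c * ∫ ω, (X ω - ∫ ω', X ω' ∂μ) ^ 2 ∂μ ≤ (∫ ω, g (X ω) ∂μ) - g (∫ ω, X ω ∂μ) := by
  have hjensen := hconv.map_integral_le (hgc.sub (by fun_prop)) hs hXs hX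
    (hgX.sub (hX2.const_mul (c / 2)))
  rw [integral_sub hgX (hX2.const_mul _), integral_const_mul, sub_self] at hjensen
  linarith

theorem half_mul_variance_le_jensen_gap {Ω : Type*} [MeasurableSpace Ω] (μ : Measure Ω)
    [IsProbabilityMeasure μ] {a b : ℝ} {X : Ω → ℝ} (hX : Measurable X)
    (hXab : ∀ ω, X ω ∈ Icc a b) {g : ℝ → ℝ} (hg : ContDiffOn ℝ 2 g (Icc a b)) {c : ℝ}
    (hc : ∀ x ∈ Ioo a b, c ≤ iteratedDerivWithin 2 g (Icc a b) x) :
    1 / 2 * c * ∫ ω, (X ω - ∫ ω', X ω' ∂μ) ^ 2 ∂μ ≤ (∫ ω, g (X ω) ∂μ) - g (∫ ω, X ω ∂μ) :=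
  (convexOn_Icc_sub_mul_sq_of_le_iteratedDerivWithin hg hc _).half_mul_variance_le_integral_sub
    hg.continuousOn isClosed_Icc (ae_of_all _ hXab)
    (continuousOn_id.integrable_comp_of_isCompact isCompact_Icc hX hXab)
    (hg.continuousOn.integrable_comp_of_isCompact isCompact_Icc hX hXab)
    ((continuousOn_id.sub continuousOn_const).pow 2 |>.integrable_comp_of_isCompact
      isCompact_Icc hX hXab)

theorem jensen_gap_le_half_mul_variance {Ω : Type*} [MeasurableSpace Ω] (μ : Measure Ω)
    [IsProbabilityMeasure μ] {a b : ℝ} {X : Ω → ℝ} (hX : Measurable X)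
    (hXab : ∀ ω, X ω ∈ Icc a b) {g : ℝ → ℝ} (hg : ContDiffOn ℝ 2 g (Icc a b)) {C : ℝ}
    (hC : ∀ x ∈ Ioo a b, iteratedDerivWithin 2 g (Icc a b) x ≤ C) :
    (∫ ω, g (X ω) ∂μ) - g (∫ ω, X ω ∂μ) ≤ 1 / 2 * C * ∫ ω, (X ω - ∫ ω', X ω' ∂μ) ^ 2 ∂μ := by
  have := half_mul_variance_le_jensen_gap μ hX hXab hg.neg (c := -C) fun x hx => by
    rw [iteratedDerivWithin_fun_neg]
    exact neg_le_neg (hC x hx)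
  rw [integral_neg] at this
  linarith

theorem jensen_gap_second_derivative_bounds_general
    {Ω : Type*} [MeasurableSpace Ω] (μ : Measure Ω) [IsProbabilityMeasure μ]
    (a b : ℝ)
    (X : Ω → ℝ) (hX : Measurable X) (hXab : ∀ ω, X ω ∈ Set.Icc a b)
    (g : ℝ → ℝ) (hg : ContDiffOn ℝ 2 g (Set.Icc a b)) :
    (1 / 2) * sInf ((fun x => iteratedDerivWithin 2 g (Set.Icc a b) x) '' Set.Icc a b)
        * (∫ ω, (X ω - ∫ ω', X ω' ∂μ) ^ 2 ∂μ)
      ≤ (∫ ω, g (X ω) ∂μ) - g (∫ ω, X ω ∂μ) ∧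
    (∫ ω, g (X ω) ∂μ) - g (∫ ω, X ω ∂μ)
      ≤ (1 / 2) * sSup ((fun x => iteratedDerivWithin 2 g (Set.Icc a b) x) '' Set.Icc a b)
        * (∫ ω, (X ω - ∫ ω', X ω' ∂μ) ^ 2 ∂μ) := by
  have hK := isCompact_image_iteratedDerivWithin_Icc hg
  exact ⟨half_mul_variance_le_jensen_gap μ hX hXab hg fun x hx =>
      csInf_le hK.bddBelow (mem_image_of_mem _ (Ioo_subset_Icc_self hx)),
    jensen_gap_le_half_mul_variance μ hX hXab hg fun x hx =>
      le_csSup hK.bddAbove (mem_image_of_mem _ (Ioo_subset_Icc_self hx))⟩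

/-- (Jensen gap bounds.)  Let `X` be a random variable with values in
`[a, b]` on a probability space, and let `g : [a,b] → ℝ` be twice continuously differentiable.
Then `½ (inf_{x ∈ [a,b]} g''(x)) Var X ≤ E[g(X)] − g(E[X]) ≤ ½ (sup_{x ∈ [a,b]} g''(x)) Var X`,
where `Var X = E[(X − E[X])²]`. -/
theorem jensen_gap_second_derivative_bounds
    {Ω : Type*} [MeasurableSpace Ω] (μ : Measure Ω) [IsProbabilityMeasure μ]
    (a b : ℝ) (hab : a ≤ b)
    (X : Ω → ℝ) (hX : Measurable X) (hXab : ∀ ω, X ω ∈ Set.Icc a b)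
    (g : ℝ → ℝ) (hg : ContDiffOn ℝ 2 g (Set.Icc a b)) :
    (1 / 2) * sInf ((fun x => iteratedDerivWithin 2 g (Set.Icc a b) x) '' Set.Icc a b)
        * (∫ ω, (X ω - ∫ ω', X ω' ∂μ) ^ 2 ∂μ)
      ≤ (∫ ω, g (X ω) ∂μ) - g (∫ ω, X ω ∂μ) ∧
    (∫ ω, g (X ω) ∂μ) - g (∫ ω, X ω ∂μ)
      ≤ (1 / 2) * sSup ((fun x => iteratedDerivWithin 2 g (Set.Icc a b) x) '' Set.Icc a b)
        * (∫ ω, (X ω - ∫ ω', X ω' ∂μ) ^ 2 ∂μ) :=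
  jensen_gap_second_derivative_bounds_general μ a b X hX hXab g hg
end

section
/- Let μ ∈ ℝ^d and let Σ ∈ ℝ^{d×d} be symmetric positive definite, and let p = N(μ, Σ). Then the relative Fisher information matrix of γ with respect to p equals FI(γ, p) = (Σ^{-1} − I_d)² + Σ^{-1} μ μᵀ Σ^{-1}. -/
/-!
The score `∇ log (γ/p)(x) = (Σ⁻¹ - I) x - Σ⁻¹ μ` is affine in `x`, so `FI(γ, p)` is the second
moment matrix of an affine image of `γ`. For any centered measure with identity covariance,
`E[(A x - b)(A x - b)ᵀ] = A Aᵀ + b bᵀ`, since the cross terms are linear in `x` and average out.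
With `A = Σ⁻¹ - I` and `b = Σ⁻¹ μ`, the symmetry of `Σ⁻¹` gives the stated formula.
-/

open MeasureTheory ProbabilityTheory Matrix

structure IsCenteredIsotropic {ι : Type*} [Fintype ι] [DecidableEq ι] (ν : Measure (ι → ℝ)) :
    Prop where
  memLp_eval : ∀ k, MemLp (fun x => x k) 2 ν
  integral_eval : ∀ k, ∫ x, x k ∂ν = 0
  integral_eval_mul_eval : ∀ k l, ∫ x, x k * x l ∂ν = (1 : Matrix ι ι ℝ) k l

namespace IsCenteredIsotropic

variable {ι : Type*} [Fintype ι] [DecidableEq ι] {ν : Measure (ι → ℝ)}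
  (hν : IsCenteredIsotropic ν)
include hν

lemma memLp_dotProduct (v : ι → ℝ) : MemLp (fun x => v ⬝ᵥ x) 2 ν :=
  memLp_finsetSum Finset.univ fun k _ => (hν.memLp_eval k).const_mul (v k)

lemma integral_dotProduct [IsFiniteMeasure ν] (v : ι → ℝ) : ∫ x, v ⬝ᵥ x ∂ν = 0 := by
  simp only [dotProduct]
  rw [integral_finsetSum _ fun k _ => ((hν.memLp_eval k).integrable one_le_two).const_mul (v k)]
  simp [integral_const_mul, hν.integral_eval]

lemma integral_dotProduct_mul_dotProduct (v w : ι → ℝ) :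
    ∫ x, (v ⬝ᵥ x) * (w ⬝ᵥ x) ∂ν = v ⬝ᵥ w := by
  have hint : ∀ k l, Integrable (fun x => v k * w l * (x k * x l)) ν := fun k l =>
    ((hν.memLp_eval k).integrable_mul (hν.memLp_eval l)).const_mul _
  simp_rw [dotProduct, Finset.sum_mul_sum, mul_mul_mul_comm _ (_ : ℝ)]
  rw [integral_finsetSum _ fun k _ => integrable_finsetSum _ fun l _ => hint k l]
  simp_rw [integral_finsetSum _ fun l _ => hint _ l, integral_const_mul,
    hν.integral_eval_mul_eval, one_apply, mul_ite, mul_one, mul_zero, Finset.sum_ite_eq,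
    Finset.mem_univ, if_true]

lemma integral_mulVec_sub_mul_mulVec_sub [IsProbabilityMeasure ν] {m : Type*}
    (A : Matrix m ι ℝ) (b : m → ℝ) :
    (of fun i j => ∫ x, (A *ᵥ x - b) i * (A *ᵥ x - b) j ∂ν) = A * Aᵀ + vecMulVec b b := by
  ext i j
  have hexpand : ∀ x, (A *ᵥ x - b) i * (A *ᵥ x - b) j
      = (A i ⬝ᵥ x) * (A j ⬝ᵥ x) - (b j • A i + b i • A j) ⬝ᵥ x + b i * b j := fun x => by
    simp only [Pi.sub_apply, mulVec, add_dotProduct, smul_dotProduct, smul_eq_mul]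
    ring
  have hquad : Integrable (fun x => (A i ⬝ᵥ x) * (A j ⬝ᵥ x)) ν :=
    (hν.memLp_dotProduct (A i)).integrable_mul (hν.memLp_dotProduct (A j))
  have hlin := (hν.memLp_dotProduct (b j • A i + b i • A j)).integrable one_le_two
  simp_rw [of_apply, hexpand]
  rw [integral_add ?_ (integrable_const _), integral_sub hquad hlin,
    hν.integral_dotProduct_mul_dotProduct, hν.integral_dotProduct]
  · simp [mul_apply, dotProduct, vecMulVec_apply]
  · exact hquad.sub hlin

end IsCenteredIsotropic

lemma integral_sq_gaussianReal (m : ℝ) (v : NNReal) :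
    ∫ x, x ^ 2 ∂gaussianReal m v = m ^ 2 + v := by
  have h := variance_eq_sub (memLp_id_gaussianReal 2 (μ := m) (v := v))
  simp only [variance_id_gaussianReal, id, integral_id_gaussianReal, Pi.pow_apply] at h
  linarith

instance isProbabilityMeasure_stdGaussian (d : ℕ) : IsProbabilityMeasure (stdGaussian d) := by
  unfold _root_.stdGaussian
  infer_instance

lemma isCenteredIsotropic_stdGaussian (d : ℕ) : IsCenteredIsotropic (stdGaussian d) where
  memLp_eval k := (memLp_id_gaussianReal 2).comp_measurePreserving (measurePreserving_eval _ k)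
  integral_eval k := integral_eval.trans integral_id_gaussianReal
  integral_eval_mul_eval k l := by
    rcases eq_or_ne k l with rfl | hkl
    · rw [one_apply_eq, _root_.stdGaussian,
        integral_comp_eval (X := fun _ : Fin d => ℝ) (i := k) (f := fun t => t * t) (by fun_prop)]
      simpa [← pow_two] using integral_sq_gaussianReal 0 1
    · have hindep := (iIndepFun_pi (μ := fun _ : Fin d => gaussianReal 0 1) (X := fun _ t => t)
        fun _ => aemeasurable_id').indepFun hkl
      rw [one_apply_ne hkl, _root_.stdGaussian, hindep.integral_fun_mul_eq_mul_integral
        (measurable_pi_apply k).aestronglyMeasurable (measurable_pi_apply l).aestronglyMeasurable]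
      simp [integral_eval, integral_id_gaussianReal]

lemma Matrix.IsSymm.vecMulVec_mulVec_mulVec {n R : Type*} [Fintype n] [CommSemiring R]
    {M : Matrix n n R} (hM : M.IsSymm) (v : n → R) :
    vecMulVec (M *ᵥ v) (M *ᵥ v) = M * vecMulVec v v * M := by
  rw [mul_vecMulVec, vecMulVec_mul, ← vecMul_transpose, hM.eq]

/-- Let `μ ∈ ℝ^d`, `Σ` symmetric positive definite, and `p = N(μ, Σ)`.
Then the relative Fisher information matrix of `γ` with respect to `p`,
`FI(γ, p) = E_γ[∇ log (γ/p)(x) (∇ log (γ/p)(x))ᵀ]`, equals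
`(Σ⁻¹ − I_d)² + Σ⁻¹ μ μᵀ Σ⁻¹`.  Here `∇ log (γ/p)(x) = −x + Σ⁻¹ (x − μ)` since
`∇ log p(x) = −Σ⁻¹ (x − μ)` and `∇ log γ(x) = −x`. -/
theorem relative_fisher_information_gaussian
    {d : ℕ} (μv : Fin d → ℝ) (Sig : Matrix (Fin d) (Fin d) ℝ) (hSig : Sig.PosDef) :
    (Matrix.of fun i j =>
        ∫ x, (Sig⁻¹.mulVec (x - μv) - x) i * (Sig⁻¹.mulVec (x - μv) - x) j ∂(stdGaussian d))
      = (Sig⁻¹ - 1) ^ 2 + Sig⁻¹ * Matrix.vecMulVec μv μv * Sig⁻¹ := by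
  have hsymm : (Sig⁻¹).IsSymm := isHermitian_iff_isSymm.mp hSig.isHermitian.inv
  have hscore : ∀ x, Sig⁻¹ *ᵥ (x - μv) - x = (Sig⁻¹ - 1) *ᵥ x - Sig⁻¹ *ᵥ μv := fun x => by
    rw [mulVec_sub, sub_mulVec, one_mulVec, sub_right_comm]
  simp_rw [hscore]
  rw [(isCenteredIsotropic_stdGaussian d).integral_mulVec_sub_mul_mulVec_sub, transpose_sub,
    hsymm.eq, transpose_one, ← pow_two, hsymm.vecMulVec_mulVec_mulVec]
end
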